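/- arXiv:1402.4855 — 3 statements merged into one kernel-verified Lean document; each statement's English description precedes it below -/
import Mathlib

section
/- If a point x satisfies ‖x − a‖ ≤ min(‖a − w‖, ‖a − p‖) for some point a on the segment from w to p, then x lies in the closed disk with diameter segment wp. -/
theorem min_add_abs_sub_half (t : ℝ) : min t (1 - t) + |t - 1 / 2| = 1 / 2 := by
  rcases le_total t (1 / 2) with h | h
  · rw [min_eq_left (by linarith), abs_of_nonpos (by linarith)]; ring
  · rw [min_eq_right (by linarith), abs_of_nonneg (by linarith)]; ring

theorem min_dist_add_dist_midpoint_of_mem_segment {E : Type*} [NormedAddCommGroup E]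
    [NormedSpace ℝ E] {w p a : E} (ha : a ∈ segment ℝ w p) :
    min (dist a w) (dist a p) + dist a (midpoint ℝ w p) = dist w p / 2 := by
  rw [segment_eq_image_lineMap] at ha
  obtain ⟨t, ⟨ht₀, ht₁⟩, rfl⟩ := ha
  rw [midpoint, dist_lineMap_left, dist_lineMap_right, dist_lineMap_lineMap,
    Real.norm_of_nonneg ht₀, Real.norm_of_nonneg (sub_nonneg.2 ht₁), ← min_mul_of_nonneg _ _
    dist_nonneg, Real.dist_eq, invOf_eq_inv, ← one_div, ← add_mul, min_add_abs_sub_half]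
  ring

theorem stmt_2 (w p x a : EuclideanSpace ℝ (Fin 2))
    (ha : a ∈ segment ℝ w p)
    (hx : dist x a ≤ min (dist a w) (dist a p)) :
    dist x (midpoint ℝ w p) ≤ dist w p / 2 :=
  calc dist x (midpoint ℝ w p) ≤ dist x a + dist a (midpoint ℝ w p) := dist_triangle _ _ _
    _ ≤ min (dist a w) (dist a p) + dist a (midpoint ℝ w p) := by gcongr
    _ = dist w p / 2 := min_dist_add_dist_midpoint_of_mem_segment ha
end

section
/- Let P be a finite set of points in the plane, s ∈ P, p ∈ P with d(s,p) = i ≥ 1 (graph distance in the unit disk graph G(P)), and let w be a point of P with d(s,w) = i − 1 minimizing the Euclidean distance ‖w − p‖ among all such points. Then ‖w − p‖ ≤ 1, and every point x ∈ P lying in the closed disk with diameter wp satisfies d(s,x) ∈ {i−1, i}; moreover if x ≠ w lies strictly closer to p than w does, then d(s,x) = i. -/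
/-!
Let `v` be the predecessor of `p` on a shortest `s`–`p` path. Then `d(s,v) = i - 1` and
`‖v - p‖ ≤ 1`, so the minimality of `w` gives `‖w - p‖ ≤ 1`. A point `x` of the disk with
diameter `wp` is within `‖w - p‖ ≤ 1` of both `w` and `p`, so its graph distance to `s` differs by
at most one from both `i - 1` and `i`. If `x` is strictly closer to `p` than `w`, the
minimality of `w` rules out `d(s,x) = i - 1`.
-/

/-- The unit disk graph on a finite set of points in the plane:
distinct points are adjacent iff their Euclidean distance is at most 1. -/
noncomputable def unitDiskGraph (P : Finset (EuclideanSpace ℝ (Fin 2))) :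
    SimpleGraph P :=
  SimpleGraph.fromRel (fun p q => dist (p : EuclideanSpace ℝ (Fin 2)) q ≤ 1)

theorem dist_le_of_dist_midpoint_le {V P : Type*} [SeminormedAddCommGroup V] [NormedSpace ℝ V]
    [PseudoMetricSpace P] [NormedAddTorsor V P] {x a b : P}
    (hx : dist x (midpoint ℝ a b) ≤ dist a b / 2) :
    dist x a ≤ dist a b ∧ dist x b ≤ dist a b := by
  have ha : dist (midpoint ℝ a b) a = dist a b / 2 := by
    rw [dist_midpoint_left (𝕜 := ℝ)]; norm_num; ring
  have hb : dist (midpoint ℝ a b) b = dist a b / 2 := by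
    rw [dist_midpoint_right (𝕜 := ℝ)]; norm_num; ring
  constructor
  · linarith [dist_triangle x (midpoint ℝ a b) a]
  · linarith [dist_triangle x (midpoint ℝ a b) b]

namespace SimpleGraph

variable {V : Type*} {G : SimpleGraph V}

theorem exists_adj_dist_add_one_eq {s p : V} (h : G.dist s p ≠ 0) :
    ∃ v, G.Adj v p ∧ G.Reachable s v ∧ G.dist s v + 1 = G.dist s p := by
  obtain ⟨W, hW⟩ := exists_walk_of_dist_ne_zero h
  have hW' : ¬W.Nil := by rw [← Walk.length_eq_zero_iff]; omega
  have hadj := W.adj_penultimate hW'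
  refine ⟨W.penultimate, hadj, ⟨W.dropLast⟩, ?_⟩
  have hle := G.dist_le W.dropLast
  have hge := hadj.reachable.dist_triangle_right s
  rw [Walk.length_dropLast, hW] at hle
  rw [dist_eq_one_iff_adj.mpr hadj] at hge
  omega

end SimpleGraph

section UnitDiskGraph

variable {P : Finset (EuclideanSpace ℝ (Fin 2))} {a b : P}

theorem unitDiskGraph_adj_iff :
    (unitDiskGraph P).Adj a b ↔ a ≠ b ∧ dist (a : EuclideanSpace ℝ (Fin 2)) b ≤ 1 := by
  simp only [unitDiskGraph, SimpleGraph.fromRel_adj, dist_comm (b : EuclideanSpace ℝ (Fin 2)),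
    or_self]

theorem unitDiskGraph_adj_or_eq (h : dist (a : EuclideanSpace ℝ (Fin 2)) b ≤ 1) :
    (unitDiskGraph P).Adj a b ∨ a = b := by
  by_cases hab : a = b
  · exact .inr hab
  · exact .inl (unitDiskGraph_adj_iff.mpr ⟨hab, h⟩)

theorem unitDiskGraph_reachable (h : dist (a : EuclideanSpace ℝ (Fin 2)) b ≤ 1) :
    (unitDiskGraph P).Reachable a b := by
  rcases unitDiskGraph_adj_or_eq h with hadj | rfl
  · exact hadj.reachable
  · rfl

theorem unitDiskGraph_dist_le_dist_add_one (s : P) (h : dist (a : EuclideanSpace ℝ (Fin 2)) b ≤ 1) :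
    (unitDiskGraph P).dist s b ≤ (unitDiskGraph P).dist s a + 1 := by
  rcases unitDiskGraph_adj_or_eq h with hadj | rfl
  · rw [← SimpleGraph.dist_eq_one_iff_adj.mpr hadj]
    exact hadj.reachable.dist_triangle_right s
  · omega

end UnitDiskGraph

theorem stmt_7_general (P : Finset (EuclideanSpace ℝ (Fin 2))) (s p w : P) (i : ℕ)
    (hdp : (unitDiskGraph P).dist s p = i)
    (hdw : (unitDiskGraph P).dist s w + 1 = i)
    (hmin : ∀ w' : P, (unitDiskGraph P).Reachable s w' → (unitDiskGraph P).dist s w' + 1 = i →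
      dist (w : EuclideanSpace ℝ (Fin 2)) p ≤ dist (w' : EuclideanSpace ℝ (Fin 2)) p) :
    dist (w : EuclideanSpace ℝ (Fin 2)) p ≤ 1 ∧
    (∀ x : P,
      dist (x : EuclideanSpace ℝ (Fin 2)) (midpoint ℝ (w : EuclideanSpace ℝ (Fin 2)) p)
        ≤ dist (w : EuclideanSpace ℝ (Fin 2)) p / 2 →
      ((unitDiskGraph P).dist s x = i - 1 ∨ (unitDiskGraph P).dist s x = i) ∧
      (x ≠ w → dist (x : EuclideanSpace ℝ (Fin 2)) p < dist (w : EuclideanSpace ℝ (Fin 2)) p →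
        (unitDiskGraph P).dist s x = i)) := by
  have hdp0 : (unitDiskGraph P).dist s p ≠ 0 := by omega
  have hsp : (unitDiskGraph P).Reachable s p := .of_dist_ne_zero hdp0
  obtain ⟨v, hvp, hsv, hdv⟩ := SimpleGraph.exists_adj_dist_add_one_eq hdp0
  have hwp : dist (w : EuclideanSpace ℝ (Fin 2)) p ≤ 1 :=
    (hmin v hsv (by omega)).trans (unitDiskGraph_adj_iff.mp hvp).2
  refine ⟨hwp, fun x hx => ?_⟩
  obtain ⟨hxw, hxp⟩ := dist_le_of_dist_midpoint_le hx
  have hsx : (unitDiskGraph P).Reachable s x :=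
    hsp.trans (unitDiskGraph_reachable (hxp.trans hwp)).symm
  have hup := unitDiskGraph_dist_le_dist_add_one s ((dist_comm _ _).trans_le (hxw.trans hwp))
  have hlow := unitDiskGraph_dist_le_dist_add_one s (hxp.trans hwp)
  refine ⟨by omega, fun _ hlt => ?_⟩
  by_contra hdx
  exact (hmin x hsx (by omega)).not_gt hlt

theorem stmt_7 (P : Finset (EuclideanSpace ℝ (Fin 2))) (s p w : P) (i : ℕ) (hi : 1 ≤ i)
    (hreach : (unitDiskGraph P).Reachable s p)
    (hdp : (unitDiskGraph P).dist s p = i)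
    (hwreach : (unitDiskGraph P).Reachable s w)
    (hdw : (unitDiskGraph P).dist s w + 1 = i)
    (hmin : ∀ w' : P, (unitDiskGraph P).Reachable s w' → (unitDiskGraph P).dist s w' + 1 = i →
      dist (w : EuclideanSpace ℝ (Fin 2)) p ≤ dist (w' : EuclideanSpace ℝ (Fin 2)) p) :
    dist (w : EuclideanSpace ℝ (Fin 2)) p ≤ 1 ∧
    (∀ x : P,
      dist (x : EuclideanSpace ℝ (Fin 2)) (midpoint ℝ (w : EuclideanSpace ℝ (Fin 2)) p)
        ≤ dist (w : EuclideanSpace ℝ (Fin 2)) p / 2 →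
      ((unitDiskGraph P).dist s x = i - 1 ∨ (unitDiskGraph P).dist s x = i) ∧
      (x ≠ w → dist (x : EuclideanSpace ℝ (Fin 2)) p < dist (w : EuclideanSpace ℝ (Fin 2)) p →
        (unitDiskGraph P).dist s x = i)) :=
  stmt_7_general P s p w i hdp hdw hmin
end

section
/- Let P be a finite set of points in the plane, s ∈ P, and d the graph distance in the unit disk graph G(P). For any point p with d(s,p) = i ≥ 1 and any point x on the straight segment from w to p, where w ∈ P satisfies d(s,w) = i − 1 and ‖w − p‖ ≤ 1: any q ∈ P whose Euclidean distance to x is at most min(‖x − w‖, ‖x − p‖) satisfies i − 1 ≤ d(s,q) ≤ i. -/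
theorem dist_le_dist_of_mem_segment {E : Type*} [SeminormedAddCommGroup E] [NormedSpace ℝ E]
    {w p x q : E} (hx : x ∈ segment ℝ w p) (hq : dist q x ≤ dist x p) :
    dist q w ≤ dist w p :=
  calc dist q w ≤ dist q x + dist x w := dist_triangle _ _ _
    _ ≤ dist w x + dist x p := by rw [dist_comm x w]; linarith
    _ = dist w p := dist_add_dist_of_mem_segment hx

theorem SimpleGraph.dist_le_dist_add_one_of_adj_or_eq {V : Type*} {G : SimpleGraph V}
    {s u v : V} (h : G.Adj u v ∨ u = v) : G.dist s v ≤ G.dist s u + 1 := by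
  rcases h with hadj | rfl
  · rcases hadj.diff_dist_adj (u := s) with h | h | h <;> omega
  · omega

theorem unitDiskGraph_adj_or_eq_of_dist_le_one {P : Finset (EuclideanSpace ℝ (Fin 2))}
    {u v : P} (h : dist (u : EuclideanSpace ℝ (Fin 2)) v ≤ 1) :
    (unitDiskGraph P).Adj u v ∨ u = v := by
  by_cases huv : u = v
  · exact Or.inr huv
  · exact Or.inl (SimpleGraph.fromRel_adj _ _ _ |>.mpr ⟨huv, Or.inl h⟩)

theorem stmt_14_general (P : Finset (EuclideanSpace ℝ (Fin 2))) (s p w : P) (i : ℕ)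
    (hdp : (unitDiskGraph P).dist s p = i)
    (hdw : (unitDiskGraph P).dist s w + 1 = i)
    (hwp : dist (w : EuclideanSpace ℝ (Fin 2)) p ≤ 1)
    (x : EuclideanSpace ℝ (Fin 2))
    (hx : x ∈ segment ℝ (w : EuclideanSpace ℝ (Fin 2)) (p : EuclideanSpace ℝ (Fin 2)))
    (q : P)
    (hq : dist (q : EuclideanSpace ℝ (Fin 2)) x ≤
      min (dist x (w : EuclideanSpace ℝ (Fin 2))) (dist x (p : EuclideanSpace ℝ (Fin 2)))) :
    i ≤ (unitDiskGraph P).dist s q + 1 ∧ (unitDiskGraph P).dist s q ≤ i := by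
  have hwq : dist (w : EuclideanSpace ℝ (Fin 2)) q ≤ 1 := by
    rw [dist_comm]
    exact (dist_le_dist_of_mem_segment hx (hq.trans (min_le_right _ _))).trans hwp
  have hqp : dist (q : EuclideanSpace ℝ (Fin 2)) p ≤ 1 := by
    rw [segment_symm] at hx
    rw [dist_comm] at hwp
    exact (dist_le_dist_of_mem_segment hx (hq.trans (min_le_left _ _))).trans hwp
  have hp_le : (unitDiskGraph P).dist s p ≤ (unitDiskGraph P).dist s q + 1 :=
    SimpleGraph.dist_le_dist_add_one_of_adj_or_eq (unitDiskGraph_adj_or_eq_of_dist_le_one hqp)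
  have hq_le : (unitDiskGraph P).dist s q ≤ (unitDiskGraph P).dist s w + 1 :=
    SimpleGraph.dist_le_dist_add_one_of_adj_or_eq (unitDiskGraph_adj_or_eq_of_dist_le_one hwq)
  omega

theorem stmt_14 (P : Finset (EuclideanSpace ℝ (Fin 2))) (s p w : P) (i : ℕ) (hi : 1 ≤ i)
    (hreach : (unitDiskGraph P).Reachable s p)
    (hdp : (unitDiskGraph P).dist s p = i)
    (hwreach : (unitDiskGraph P).Reachable s w)
    (hdw : (unitDiskGraph P).dist s w + 1 = i)
    (hwp : dist (w : EuclideanSpace ℝ (Fin 2)) p ≤ 1)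
    (x : EuclideanSpace ℝ (Fin 2))
    (hx : x ∈ segment ℝ (w : EuclideanSpace ℝ (Fin 2)) (p : EuclideanSpace ℝ (Fin 2)))
    (q : P)
    (hq : dist (q : EuclideanSpace ℝ (Fin 2)) x ≤
      min (dist x (w : EuclideanSpace ℝ (Fin 2))) (dist x (p : EuclideanSpace ℝ (Fin 2)))) :
    i ≤ (unitDiskGraph P).dist s q + 1 ∧ (unitDiskGraph P).dist s q ≤ i :=
  stmt_14_general P s p w i hdp hdw hwp x hx q hq
end
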